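/- Let W be a real C×D matrix with singular value decomposition W = Σ_{i=1}^C s_i·u_i·v_i^T, where (u_1,…,u_C) is an orthonormal family in ℝ^C, (v_1,…,v_C) is an orthonormal family in ℝ^D, and s_1 ≥ ⋯ ≥ s_C ≥ 0. Fix k < C and let W_k = Σ_{i=1}^k s_i·u_i·v_i^T. Let b ∈ ℝ^C, and let h ∈ ℝ^D with Euclidean norm ‖h‖₂ ≤ R. Define p = σ(W·h + b) and p̃ = σ(W_k·h + b), where σ is the softmax function. Then ‖p̃ − p‖_∞ ≤ (1/2)·R·s_{k+1}. -/

import Mathlib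

/-!
The difference of the two logit vectors is the SVD tail `∑_{i ≥ k} s_i ⟨v_i, h⟩ u_i`. By
orthonormality of the `u_i` its Euclidean norm is `(∑_{i ≥ k} s_i² ⟨v_i, h⟩²)^{1/2}`, which by
Bessel's inequality for the `v_i` is at most `s_{k+1} ‖h‖ ≤ s_{k+1} R`; the sup norm is smaller
still. Softmax is `1/2`-Lipschitz for the sup norm: along a segment, the derivative of `p_i` in
direction `d` is `p_i (d_i - ⟨p, d⟩)`, whose size is at most `2 p_i (1 - p_i) ‖d‖_∞ ≤ ‖d‖_∞ / 2`.
-/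

/-- The softmax function on `ℝ^C`: `σ_i(u) = exp(u_i) / ∑_ℓ exp(u_ℓ)`. -/
noncomputable def softmax {C : ℕ} (u : Fin C → ℝ) : Fin C → ℝ :=
  fun i => Real.exp (u i) / ∑ ℓ, Real.exp (u ℓ)

open Matrix WithLp

section Softmax

variable {C : ℕ}

lemma sum_exp_pos [Nonempty (Fin C)] (u : Fin C → ℝ) : 0 < ∑ ℓ, Real.exp (u ℓ) :=
  Finset.sum_pos (fun _ _ => Real.exp_pos _) Finset.univ_nonempty

lemma softmax_pos [Nonempty (Fin C)] (u : Fin C → ℝ) (i : Fin C) : 0 < softmax u i :=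
  div_pos (Real.exp_pos _) (sum_exp_pos u)

lemma sum_softmax [Nonempty (Fin C)] (u : Fin C → ℝ) : ∑ i, softmax u i = 1 := by
  simp only [softmax, ← Finset.sum_div]
  exact div_self (sum_exp_pos u).ne'

lemma hasDerivAt_softmax_add_smul (z d : Fin C → ℝ) (i : Fin C) (t : ℝ) :
    HasDerivAt (fun t : ℝ => softmax (z + t • d) i)
      (softmax (z + t • d) i * (d i - ∑ j, softmax (z + t • d) j * d j)) t := by
  have : Nonempty (Fin C) := ⟨i⟩
  have hexp : ∀ j, HasDerivAt (fun t : ℝ => Real.exp ((z + t • d) j))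
      (Real.exp ((z + t • d) j) * d j) t := fun j => by
    simpa using (((hasDerivAt_id t).mul_const (d j)).const_add (z j)).exp
  have hS := sum_exp_pos (z + t • d)
  refine ((hexp i).div (HasDerivAt.fun_sum fun j _ => hexp j) hS.ne').congr_deriv ?_
  simp only [softmax, div_mul_eq_mul_div, ← Finset.sum_div]
  field_simp

lemma abs_softmax_mul_sub_le (z d : Fin C → ℝ) (i : Fin C) :
    |softmax z i * (d i - ∑ j, softmax z j * d j)| ≤ ‖d‖ / 2 := by
  have : Nonempty (Fin C) := ⟨i⟩
  set p := softmax z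
  have hp : ∀ j, 0 < p j := softmax_pos z
  have hrest : ∑ j ∈ Finset.univ.erase i, p j = 1 - p i := by
    rw [Finset.sum_erase_eq_sub (Finset.mem_univ i), sum_softmax]
  have hdiff : ∀ j, |d i - d j| ≤ 2 * ‖d‖ := fun j => by
    have := abs_sub (d i) (d j)
    linarith [norm_le_pi_norm d i, norm_le_pi_norm d j, Real.norm_eq_abs (d i),
      Real.norm_eq_abs (d j)]
  have hcentered : |d i - ∑ j, p j * d j| ≤ (1 - p i) * (2 * ‖d‖) :=
    calc |d i - ∑ j, p j * d j| = |∑ j ∈ Finset.univ.erase i, p j * (d i - d j)| := by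
          rw [Finset.sum_erase _ (by simp)]
          simp only [mul_sub, Finset.sum_sub_distrib, ← Finset.sum_mul, p, sum_softmax, one_mul]
      _ ≤ ∑ j ∈ Finset.univ.erase i, p j * (2 * ‖d‖) := by
          refine (Finset.abs_sum_le_sum_abs _ _).trans (Finset.sum_le_sum fun j _ => ?_)
          rw [abs_mul, abs_of_pos (hp j)]
          exact mul_le_mul_of_nonneg_left (hdiff j) (hp j).le
      _ = (1 - p i) * (2 * ‖d‖) := by rw [← Finset.sum_mul, hrest]
  rw [abs_mul, abs_of_pos (hp i)]
  -- `4 p (1 - p) ≤ 1`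
  nlinarith [mul_le_mul_of_nonneg_left hcentered (hp i).le,
    mul_nonneg (sq_nonneg (2 * p i - 1)) (norm_nonneg d)]

lemma abs_softmax_sub_softmax_le (x y : Fin C → ℝ) (i : Fin C) :
    |softmax x i - softmax y i| ≤ ‖x - y‖ / 2 := by
  have h := norm_image_sub_le_of_norm_deriv_le_segment_01'
    (f := fun t : ℝ => softmax (y + t • (x - y)) i)
    (fun t _ => (hasDerivAt_softmax_add_smul y (x - y) i t).hasDerivWithinAt)
    (fun t _ => (Real.norm_eq_abs _).trans_le (abs_softmax_mul_sub_le _ (x - y) i))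
  simpa using h

lemma norm_softmax_sub_softmax_le (x y : Fin C → ℝ) :
    ‖softmax x - softmax y‖ ≤ ‖x - y‖ / 2 :=
  (pi_norm_le_iff_of_nonneg (by positivity)).2 fun i =>
    (Real.norm_eq_abs _).trans_le (abs_softmax_sub_softmax_le x y i)

end Softmax

section Orthonormal

variable {ι E F : Type*} [NormedAddCommGroup E] [InnerProductSpace ℝ E]
  [NormedAddCommGroup F] [InnerProductSpace ℝ F]

lemma Orthonormal.norm_sum_smul_sq {u : ι → E} (hu : Orthonormal ℝ u) (a : ι → ℝ)
    (T : Finset ι) : ‖∑ i ∈ T, a i • u i‖ ^ 2 = ∑ i ∈ T, a i ^ 2 := by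
  rw [← real_inner_self_eq_norm_sq, hu.inner_sum]
  simp [sq]

lemma norm_sum_mul_inner_smul_le {u : ι → E} {v : ι → F} (hu : Orthonormal ℝ u)
    (hv : Orthonormal ℝ v) {s : ι → ℝ} {T : Finset ι} {M : ℝ} (hM : 0 ≤ M)
    (hs : ∀ i ∈ T, |s i| ≤ M) (x : F) :
    ‖∑ i ∈ T, (s i * inner ℝ (v i) x) • u i‖ ≤ M * ‖x‖ := by
  refine le_of_pow_le_pow_left₀ two_ne_zero (by positivity) ?_
  calc ‖∑ i ∈ T, (s i * inner ℝ (v i) x) • u i‖ ^ 2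
      = ∑ i ∈ T, s i ^ 2 * ‖inner ℝ (v i) x‖ ^ 2 := by
        simp only [hu.norm_sum_smul_sq, mul_pow, Real.norm_eq_abs, sq_abs]
    _ ≤ ∑ i ∈ T, M ^ 2 * ‖inner ℝ (v i) x‖ ^ 2 := by
        refine Finset.sum_le_sum fun i hi => mul_le_mul_of_nonneg_right ?_ (sq_nonneg _)
        exact sq_le_sq' (abs_le.1 (hs i hi)).1 (abs_le.1 (hs i hi)).2
    _ ≤ M ^ 2 * ‖x‖ ^ 2 := by
        rw [← Finset.mul_sum]
        exact mul_le_mul_of_nonneg_left (hv.sum_inner_products_le x) (sq_nonneg M)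
    _ = (M * ‖x‖) ^ 2 := (mul_pow M ‖x‖ 2).symm

end Orthonormal

section Matrix

variable {ι m n : Type*} [Fintype n]

lemma orthonormal_toLp_of_dotProduct [DecidableEq ι] {u : ι → n → ℝ}
    (hu : ∀ i j, u i ⬝ᵥ u j = if i = j then 1 else 0) :
    Orthonormal ℝ fun i => toLp 2 (u i) := by
  rw [orthonormal_iff_ite]
  intro i j
  simpa [EuclideanSpace.inner_toLp_toLp, dotProduct_comm] using hu i j

lemma Matrix.sum_smul_vecMulVec_mulVec (T : Finset ι) (s : ι → ℝ) (u : ι → m → ℝ)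
    (v : ι → n → ℝ) (x : n → ℝ) :
    (∑ i ∈ T, s i • vecMulVec (u i) (v i)) *ᵥ x = ∑ i ∈ T, (s i * (v i ⬝ᵥ x)) • u i := by
  simp [Matrix.sum_mulVec, Matrix.smul_mulVec, Matrix.vecMulVec_mulVec, mul_smul]

lemma PiLp.norm_ofLp_le {p : ENNReal} [Fact (1 ≤ p)] {β : n → Type*}
    [∀ i, SeminormedAddCommGroup (β i)] (x : PiLp p β) : ‖ofLp x‖ ≤ ‖x‖ :=
  (pi_norm_le_iff_of_nonneg (norm_nonneg x)).2 fun i => PiLp.norm_apply_le x i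

lemma norm_sum_smul_vecMulVec_mulVec_le [Fintype m] [DecidableEq ι] {u : ι → m → ℝ}
    {v : ι → n → ℝ} (hu : ∀ i j, u i ⬝ᵥ u j = if i = j then 1 else 0)
    (hv : ∀ i j, v i ⬝ᵥ v j = if i = j then 1 else 0) {s : ι → ℝ} {T : Finset ι} {M : ℝ}
    (hM : 0 ≤ M) (hs : ∀ i ∈ T, |s i| ≤ M) (x : EuclideanSpace ℝ n) :
    ‖(∑ i ∈ T, s i • vecMulVec (u i) (v i)) *ᵥ ofLp x‖ ≤ M * ‖x‖ := by
  refine le_trans (le_of_eq ?_) ((PiLp.norm_ofLp_le _).trans (norm_sum_mul_inner_smul_le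
    (orthonormal_toLp_of_dotProduct hu) (orthonormal_toLp_of_dotProduct hv) hM hs x))
  simp [Matrix.sum_smul_vecMulVec_mulVec, EuclideanSpace.inner_eq_star_dotProduct,
    dotProduct_comm]

end Matrix

theorem softmax_perturbation_svd_truncation_general {C D : ℕ}
    (W : Matrix (Fin C) (Fin D) ℝ)
    (s : Fin C → ℝ) (u : Fin C → Fin C → ℝ) (v : Fin C → Fin D → ℝ)
    (hu : ∀ i j : Fin C, dotProduct (u i) (u j) = if i = j then (1 : ℝ) else 0)
    (hv : ∀ i j : Fin C, dotProduct (v i) (v j) = if i = j then (1 : ℝ) else 0)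
    (hs_anti : ∀ i j : Fin C, i ≤ j → s j ≤ s i)
    (hs_nonneg : ∀ i : Fin C, 0 ≤ s i)
    (hW : W = ∑ i : Fin C, s i • Matrix.vecMulVec (u i) (v i))
    (k : ℕ) (hk : k < C)
    (b : Fin C → ℝ) (R : ℝ) (h : EuclideanSpace ℝ (Fin D)) (hh : ‖h‖ ≤ R) :
    ‖softmax
          ((∑ i ∈ Finset.univ.filter (fun i : Fin C => (i : ℕ) < k),
              s i • Matrix.vecMulVec (u i) (v i)).mulVec
            (WithLp.equiv 2 (Fin D → ℝ) h) + b) -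
        softmax (W.mulVec (WithLp.equiv 2 (Fin D → ℝ) h) + b)‖ ≤
      (1 / 2) * R * s ⟨k, hk⟩ := by
  set Wk := ∑ i ∈ Finset.univ.filter (fun i : Fin C => (i : ℕ) < k),
    s i • vecMulVec (u i) (v i)
  set tail := ∑ i ∈ Finset.univ.filter (fun i : Fin C => ¬ (i : ℕ) < k),
    s i • vecMulVec (u i) (v i)
  have hsplit : W = Wk + tail := hW.trans (Finset.sum_filter_add_sum_filter_not _ _ _).symm
  have htail : ‖tail *ᵥ ofLp h‖ ≤ s ⟨k, hk⟩ * R := by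
    refine (norm_sum_smul_vecMulVec_mulVec_le hu hv (hs_nonneg _) (fun i hi => ?_) h).trans
      (mul_le_mul_of_nonneg_left hh (hs_nonneg _))
    rw [abs_of_nonneg (hs_nonneg i)]
    exact hs_anti _ _ (Fin.le_iff_val_le_val.2 (by simpa using hi))
  calc _ ≤ ‖(Wk *ᵥ ofLp h + b) - (W *ᵥ ofLp h + b)‖ / 2 := norm_softmax_sub_softmax_le _ _
    _ = ‖tail *ᵥ ofLp h‖ / 2 := by
        rw [hsplit, add_mulVec, add_sub_add_right_eq_sub, sub_add_cancel_left, norm_neg]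
    _ ≤ (1 / 2) * R * s ⟨k, hk⟩ := by linarith

/-- If `W = ∑_{i=1}^C s_i u_i v_i^T` is a singular value decomposition (orthonormal
families `u`, `v`, nonincreasing nonnegative `s`) and `W_k = ∑_{i=1}^k s_i u_i v_i^T`
is its rank-`k` truncation, then for any bias `b` and feature vector `h` with
Euclidean norm `‖h‖₂ ≤ R`, the softmax outputs `p = σ(W h + b)` and
`p̃ = σ(W_k h + b)` satisfy `‖p̃ - p‖_∞ ≤ (1/2)·R·s_{k+1}`
(the norm on `Fin C → ℝ` is the sup norm). -/
theorem softmax_perturbation_svd_truncation {C D : ℕ} (hC : 0 < C) (hD : 0 < D)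
    (W : Matrix (Fin C) (Fin D) ℝ)
    (s : Fin C → ℝ) (u : Fin C → Fin C → ℝ) (v : Fin C → Fin D → ℝ)
    (hu : ∀ i j : Fin C, dotProduct (u i) (u j) = if i = j then (1 : ℝ) else 0)
    (hv : ∀ i j : Fin C, dotProduct (v i) (v j) = if i = j then (1 : ℝ) else 0)
    (hs_anti : ∀ i j : Fin C, i ≤ j → s j ≤ s i)
    (hs_nonneg : ∀ i : Fin C, 0 ≤ s i)
    (hW : W = ∑ i : Fin C, s i • Matrix.vecMulVec (u i) (v i))
    (k : ℕ) (hk : k < C)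
    (b : Fin C → ℝ) (R : ℝ) (h : EuclideanSpace ℝ (Fin D)) (hh : ‖h‖ ≤ R) :
    ‖softmax
          ((∑ i ∈ Finset.univ.filter (fun i : Fin C => (i : ℕ) < k),
              s i • Matrix.vecMulVec (u i) (v i)).mulVec
            (WithLp.equiv 2 (Fin D → ℝ) h) + b) -
        softmax (W.mulVec (WithLp.equiv 2 (Fin D → ℝ) h) + b)‖ ≤
      (1 / 2) * R * s ⟨k, hk⟩ :=
  softmax_perturbation_svd_truncation_general W s u v hu hv hs_anti hs_nonneg hW k hk b R h hh
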